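/- arXiv:1507.07113 — 2 statements merged into one kernel-verified Lean document; each statement's English description precedes it below -/
import Mathlib

section
/- Let V be a symmetric positive definite n×n real matrix (n ≥ 1) with diagonal entries σ_i² = V_{ii}, and define v_R = Σ_{i=1}^n (1 − V_{i,-i} V_{-i,-i}^{-1} V_{-i,i} / σ_i²) and the regression effective sample size n_e^R = 1 + ((n−1)/n) v_R. Then 1 ≤ n_e^R ≤ n. Moreover, if V is diagonal (the coordinates are uncorrelated), then v_R = n and n_e^R = n. -/
/-- `V_{-i,-i}`: the `(n-1)×(n-1)` submatrix of `V` obtained by deleting the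
`i`-th row and the `i`-th column. -/
def delMinor {n : ℕ} (V : Matrix (Fin n) (Fin n) ℝ) (i : Fin n) :
    Matrix {j : Fin n // j ≠ i} {j : Fin n // j ≠ i} ℝ :=
  Matrix.of fun a b => V a.1 b.1

/-- The scalar `V_{i,-i} V_{-i,-i}⁻¹ V_{-i,i}`. -/
noncomputable def schurTerm {n : ℕ} (V : Matrix (Fin n) (Fin n) ℝ) (i : Fin n) : ℝ :=
  dotProduct (fun a : {j : Fin n // j ≠ i} => V i a.1)
    ((delMinor V i)⁻¹.mulVec fun a => V a.1 i)

/-- The total independent signal `v_R = Σ_i (1 - V_{i,-i} V_{-i,-i}⁻¹ V_{-i,i} / σ_i²)`,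
where `σ_i² = V i i`. -/
noncomputable def vR {n : ℕ} (V : Matrix (Fin n) (Fin n) ℝ) : ℝ :=
  ∑ i, (1 - schurTerm V i / V i i)

/-- The regression effective sample size `n_e^R = 1 + ((n-1)/n) v_R`. -/
noncomputable def neR {n : ℕ} (V : Matrix (Fin n) (Fin n) ℝ) : ℝ :=
  1 + (((n : ℝ) - 1) / n) * vR V


/-! Each summand `1 - V_{i,-i} V_{-i,-i}⁻¹ V_{-i,i} / σ_i²` of `v_R` lies in `[0, 1]`: the quadratic
form of the positive definite matrix `V_{-i,-i}⁻¹` at `V_{-i,i}` is nonnegative, and by the Schur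
determinant formula `det V = det V_{-i,-i} * (σ_i² - V_{i,-i} V_{-i,-i}⁻¹ V_{-i,i})` with both
determinants positive. Hence `0 ≤ v_R ≤ n`, and `n_e^R` is an increasing affine function of `v_R`
taking the values `1` and `n` at the endpoints. -/

open Matrix

theorem det_eq_det_delMinor_mul {n : ℕ} (V : Matrix (Fin n) (Fin n) ℝ) (i : Fin n)
    (h : IsUnit (delMinor V i).det) :
    V.det = (delMinor V i).det * (V i i - schurTerm V i) := by
  let := invertibleOfIsUnitDet _ h
  -- Write `Fin n` as `{i} ⊕ {j // j ≠ i}`: the Schur complement of `V_{-i,-i}` is then `1 × 1`.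
  let e := Equiv.sumCompl (· = i)
  have hblocks : V.submatrix e e = fromBlocks (V.submatrix (↑) (↑)) (V.submatrix (↑) (↑))
      (V.submatrix (↑) (↑)) (delMinor V i) := by
    ext (a | a) (b | b) <;> rfl
  rw [← det_submatrix_equiv_self e, hblocks, det_fromBlocks₂₂, invOf_eq_nonsing_inv,
    det_unique (_ - _), Matrix.mul_assoc]
  rfl

section
variable {n : ℕ} {V : Matrix (Fin n) (Fin n) ℝ}

theorem posDef_delMinor (hV : V.PosDef) (i : Fin n) : (delMinor V i).PosDef :=
  hV.submatrix Subtype.val_injective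

theorem schurTerm_nonneg (hV : V.PosDef) (i : Fin n) : 0 ≤ schurTerm V i := by
  have hrow : (fun a : {j // j ≠ i} => V i a) = fun a => V a.1 i :=
    funext fun a => hV.isHermitian.apply a i
  rw [schurTerm, hrow]
  simpa only [star_trivial] using
    (posDef_delMinor hV i).inv.posSemidef.dotProduct_mulVec_nonneg fun a : {j // j ≠ i} => V a i

theorem schurTerm_lt_diag (hV : V.PosDef) (i : Fin n) : schurTerm V i < V i i := by
  have hminor := (posDef_delMinor hV i).det_pos
  have hdet := hV.det_pos
  rw [det_eq_det_delMinor_mul V i hminor.ne'.isUnit] at hdet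
  exact sub_pos.1 (pos_of_mul_pos_right hdet hminor.le)

theorem one_sub_schurTerm_div_mem_Icc (hV : V.PosDef) (i : Fin n) :
    1 - schurTerm V i / V i i ∈ Set.Icc (0 : ℝ) 1 := by
  have hσ : 0 < V i i := hV.diag_pos
  constructor
  · have := (div_le_one hσ).2 (schurTerm_lt_diag hV i).le
    linarith
  · have := div_nonneg (schurTerm_nonneg hV i) hσ.le
    linarith

theorem vR_mem_Icc (hV : V.PosDef) : vR V ∈ Set.Icc (0 : ℝ) n := by
  constructor
  · exact Finset.sum_nonneg fun i _ => (one_sub_schurTerm_div_mem_Icc hV i).1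
  · calc vR V ≤ ∑ _i : Fin n, (1 : ℝ) :=
          Finset.sum_le_sum fun i _ => (one_sub_schurTerm_div_mem_Icc hV i).2
      _ = n := by simp

theorem schurTerm_eq_zero_of_isDiag (hD : V.IsDiag) (i : Fin n) : schurTerm V i = 0 := by
  have hrow : (fun a : {j // j ≠ i} => V i a) = 0 := funext fun a => hD (Ne.symm a.2)
  rw [schurTerm, hrow, zero_dotProduct]

theorem vR_eq_of_isDiag (hD : V.IsDiag) : vR V = n := by
  simp [vR, schurTerm_eq_zero_of_isDiag hD]

end

theorem neR_mem_Icc_general {n : ℕ} (hn : 1 ≤ n)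
    (V : Matrix (Fin n) (Fin n) ℝ) (hV : V.PosDef) :
    1 ≤ neR V ∧ neR V ≤ n ∧ (V.IsDiag → vR V = n ∧ neR V = n) := by
  have h1n : (1 : ℝ) ≤ n := by exact_mod_cast hn
  have hc0 : 0 ≤ ((n : ℝ) - 1) / n := div_nonneg (by linarith) (by linarith)
  have hcn : ((n : ℝ) - 1) / n * n = n - 1 := div_mul_cancel₀ _ (by positivity)
  obtain ⟨hvR0, hvRn⟩ := vR_mem_Icc hV
  refine ⟨?_, ?_, fun hD => ⟨vR_eq_of_isDiag hD, ?_⟩⟩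
  · exact le_add_of_nonneg_right (mul_nonneg hc0 hvR0)
  · have := mul_le_mul_of_nonneg_left hvRn hc0
    rw [neR]
    linarith
  · rw [neR, vR_eq_of_isDiag hD, hcn]
    ring

/-- For a symmetric positive definite covariance matrix `V` (`n ≥ 1`), the regression
effective sample size satisfies `1 ≤ n_e^R ≤ n`; moreover if `V` is diagonal (uncorrelated
coordinates) then `v_R = n` and `n_e^R = n`. -/
theorem neR_mem_Icc {n : ℕ} (hn : 1 ≤ n)
    (V : Matrix (Fin n) (Fin n) ℝ) (hVsymm : V.IsSymm) (hV : V.PosDef) :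
    1 ≤ neR V ∧ neR V ≤ n ∧ (V.IsDiag → vR V = n ∧ neR V = n) :=
  neR_mem_Icc_general hn V hV
end

section
/- Let V be a symmetric positive definite real matrix partitioned into n×n blocks of equal size d, with V_{ii} the i-th d×d diagonal block, V_{i,-i} the i-th block row with the i-th block deleted, V_{-i,i} the i-th block column with the i-th block deleted, and V_{-i,-i} the matrix with the i-th block row and column deleted. Then for each i, 0 ≤ det( I_d − V_{ii}^{-1} V_{i,-i} V_{-i,-i}^{-1} V_{-i,i} ) ≤ 1, where I_d is the d×d identity matrix. Consequently the multivariate regression effective sample size n_e^R = 1 + ((n−1)/n) Σ_{i=1}^n det( I_d − V_{ii}^{-1} V_{i,-i} V_{-i,-i}^{-1} V_{-i,i} ) satisfies 1 ≤ n_e^R ≤ n, with n_e^R = n when all off-diagonal blocks of V vanish. -/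
open Matrix

section helpers
lemma sum_extend {m l : Type*} [Fintype m] [Fintype l] [DecidableEq l]
    (e : m → l) (he : Function.Injective e) (w : m → ℝ) (g : l → ℝ) :
    ∑ j, Function.extend e w 0 j * g j = ∑ i, w i * g (e i) := by
  have h1 : ∑ j ∈ Finset.univ.image e, Function.extend e w 0 j * g j
      = ∑ j, Function.extend e w 0 j * g j := by
    apply Finset.sum_subset (Finset.subset_univ _)
    intro j _ hj
    have : ¬ ∃ i, e i = j := by simpa [Finset.mem_image] using hj
    rw [Function.extend_apply' _ _ _ this]
    simp
  rw [← h1, Finset.sum_image (fun a _ b _ h => he h)]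
  simp [he.extend_apply]

lemma posDef_submatrix_inj {m l : Type*} [Fintype m] [Fintype l] [DecidableEq l]
    {V : Matrix l l ℝ} (hV : V.PosDef) (e : m → l) (he : Function.Injective e) :
    (V.submatrix e e).PosDef := by
  refine Matrix.PosDef.of_dotProduct_mulVec_pos ?_ ?_
  · ext a b
    rw [Matrix.conjTranspose_apply, Matrix.submatrix_apply, Matrix.submatrix_apply,
      ← Matrix.conjTranspose_apply, hV.1.eq]
  · intro x hx
    set y : l → ℝ := Function.extend e x 0 with hy
    have hy0 : y ≠ 0 := by
      obtain ⟨i, hi⟩ := Function.ne_iff.mp hx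
      intro h
      exact hi (by simpa [hy, he.extend_apply] using congrFun h (e i))
    have hpos := hV.dotProduct_mulVec_pos hy0
    have inner : ∀ j, ∑ k, V j k * y k = ∑ i', V j (e i') * x i' := by
      intro j
      have h2 := sum_extend e he x (fun k => V j k)
      calc ∑ k, V j k * y k = ∑ k, y k * V j k := by simp [mul_comm]
      _ = ∑ i', x i' * V j (e i') := h2
      _ = ∑ i', V j (e i') * x i' := by simp [mul_comm]
    have key : dotProduct (star y) (V *ᵥ y) = dotProduct (star x) ((V.submatrix e e) *ᵥ x) := by
      simp only [dotProduct, Matrix.mulVec, Pi.star_apply, star_trivial,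
        Matrix.submatrix_apply]
      rw [sum_extend e he x (fun j => ∑ k, V j k * y k)]
      exact Finset.sum_congr rfl fun i _ => by rw [inner]
    rw [key] at hpos
    exact hpos

lemma det_nonneg_of_psd {m : Type*} [Fintype m] [DecidableEq m] {H : Matrix m m ℝ}
    (h : H.PosSemidef) : 0 ≤ H.det := by
  rw [h.1.det_eq_prod_eigenvalues]
  exact Finset.prod_nonneg fun i _ => by simpa using h.eigenvalues_nonneg i

lemma det_le_one_of_psd {m : Type*} [Fintype m] [DecidableEq m] {H : Matrix m m ℝ}
    (h : H.PosSemidef) (h1 : ((1 : Matrix m m ℝ) - H).PosSemidef) : H.det ≤ 1 := by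
  rw [h.1.det_eq_prod_eigenvalues]
  apply Finset.prod_le_one
  · exact fun i _ => by simpa using h.eigenvalues_nonneg i
  · intro k _
    set v : m → ℝ := ⇑(h.1.eigenvectorBasis k) with hv
    have hVv : H *ᵥ v = h.1.eigenvalues k • v := h.1.mulVec_eigenvectorBasis k
    have hvv : dotProduct (star v) v = 1 := by
      have hnorm : ‖h.1.eigenvectorBasis k‖ = 1 := h.1.eigenvectorBasis.orthonormal.1 k
      have h3 : (inner ℝ (h.1.eigenvectorBasis k) (h.1.eigenvectorBasis k) : ℝ)
          = dotProduct (star v) v :=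
          (EuclideanSpace.inner_eq_star_dotProduct _ _).trans (dotProduct_comm _ _)
      rw [← h3, real_inner_self_eq_norm_sq, hnorm]
      norm_num
    have hq := h1.dotProduct_mulVec_nonneg v
    rw [Matrix.sub_mulVec, Matrix.one_mulVec, dotProduct_sub, hVv, dotProduct_smul,
      hvv] at hq
    simpa using hq
end helpers


/-- The `i`-th `d×d` diagonal block `V_{ii}` of a matrix partitioned into `n×n` blocks of
equal size `d`. -/
def blkDiag {n d : ℕ} (V : Matrix (Fin n × Fin d) (Fin n × Fin d) ℝ) (i : Fin n) :
    Matrix (Fin d) (Fin d) ℝ :=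
  Matrix.of fun a b => V (i, a) (i, b)

/-- The `i`-th block row `V_{i,-i}` with the `i`-th block deleted. -/
def blkRow {n d : ℕ} (V : Matrix (Fin n × Fin d) (Fin n × Fin d) ℝ) (i : Fin n) :
    Matrix (Fin d) ({j : Fin n // j ≠ i} × Fin d) ℝ :=
  Matrix.of fun a p => V (i, a) (p.1.1, p.2)

/-- The `i`-th block column `V_{-i,i}` with the `i`-th block deleted. -/
def blkCol {n d : ℕ} (V : Matrix (Fin n × Fin d) (Fin n × Fin d) ℝ) (i : Fin n) :
    Matrix ({j : Fin n // j ≠ i} × Fin d) (Fin d) ℝ :=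
  Matrix.of fun p a => V (p.1.1, p.2) (i, a)

/-- `V_{-i,-i}`: the matrix `V` with the `i`-th block row and block column deleted. -/
def blkMinor {n d : ℕ} (V : Matrix (Fin n × Fin d) (Fin n × Fin d) ℝ) (i : Fin n) :
    Matrix ({j : Fin n // j ≠ i} × Fin d) ({j : Fin n // j ≠ i} × Fin d) ℝ :=
  Matrix.of fun p q => V (p.1.1, p.2) (q.1.1, q.2)

/-- The determinant `det(I_d - V_{ii}⁻¹ V_{i,-i} V_{-i,-i}⁻¹ V_{-i,i})`, the fraction of
generalized variance of species `i` not explained by the other species. -/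
noncomputable def blkTerm {n d : ℕ} (V : Matrix (Fin n × Fin d) (Fin n × Fin d) ℝ)
    (i : Fin n) : ℝ :=
  ((1 : Matrix (Fin d) (Fin d) ℝ) -
      (blkDiag V i)⁻¹ * blkRow V i * (blkMinor V i)⁻¹ * blkCol V i).det

lemma blkTerm_mem {n d : ℕ} (V : Matrix (Fin n × Fin d) (Fin n × Fin d) ℝ)
    (hVsymm : V.IsSymm) (hV : V.PosDef) (i : Fin n) :
    0 ≤ blkTerm V i ∧ blkTerm V i ≤ 1 := by
  set A := blkDiag V i with hAdef
  set B := blkRow V i with hBdef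
  set D := blkMinor V i with hDdef
  have hC : blkCol V i = Bᴴ := by
    ext p a
    simp only [blkCol, blkRow, hBdef, Matrix.conjTranspose_apply, Matrix.of_apply, star_trivial]
    exact hVsymm.apply (i, a) (p.1.1, p.2)
  have hA : A.PosDef := by
    have : ((V.submatrix (fun a : Fin d => ((i, a) : Fin n × Fin d))
        (fun a => (i, a)))).PosDef :=
      posDef_submatrix_inj hV _ (fun a b h => by simpa using congrArg Prod.snd h)
    exact this
  have hD : D.PosDef := by
    have : ((V.submatrix (fun p : {j : Fin n // j ≠ i} × Fin d => ((p.1.1, p.2) : Fin n × Fin d))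
        (fun p => (p.1.1, p.2)))).PosDef :=
      posDef_submatrix_inj hV _ (fun p q h => by
        simp only [Prod.mk.injEq] at h
        exact Prod.ext (Subtype.ext h.1) h.2)
    exact this
  have hW : (Matrix.fromBlocks A B Bᴴ D).PosSemidef := by
    have h0 : V.submatrix (Sum.elim (fun a : Fin d => ((i, a) : Fin n × Fin d))
        (fun p : {j : Fin n // j ≠ i} × Fin d => (p.1.1, p.2)))
        (Sum.elim (fun a => (i, a)) (fun p => (p.1.1, p.2)))
        = Matrix.fromBlocks A B Bᴴ D := by
      ext x y
      cases x with
      | inl a =>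
        cases y with
        | inl b => rfl
        | inr q => rfl
      | inr p =>
        cases y with
        | inl b =>
          simp only [Matrix.submatrix_apply, Sum.elim_inl, Sum.elim_inr,
            Matrix.fromBlocks_apply₂₁, Matrix.conjTranspose_apply, star_trivial]
          exact hVsymm.apply (i, b) (p.1.1, p.2)
        | inr q => rfl
    rw [← h0]
    exact hV.posSemidef.submatrix _
  haveI : Invertible D := hD.isUnit.invertible
  have hS : (A - B * D⁻¹ * Bᴴ).PosSemidef := (Matrix.PosDef.fromBlocks₂₂ A B hD).mp hW
  have hM : (B * D⁻¹ * Bᴴ).PosSemidef := hD.inv.posSemidef.mul_mul_conjTranspose_same B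
  open scoped MatrixOrder in set R := CFC.sqrt A⁻¹ with hRdef
  open scoped MatrixOrder in have hR : R.PosSemidef := (CFC.sqrt_nonneg A⁻¹).posSemidef
  open scoped MatrixOrder in have hRR : R * R = A⁻¹ := CFC.sqrt_mul_sqrt_self A⁻¹ hA.inv.posSemidef.nonneg
  have hRH : Rᴴ = R := hR.1
  have hRdet : IsUnit R.det := by
    have hsq : R.det * R.det = A⁻¹.det := by rw [← Matrix.det_mul, hRR]
    have hApos : 0 < A⁻¹.det := hA.inv.det_pos
    refine isUnit_iff_ne_zero.mpr fun h => ?_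
    rw [h, mul_zero] at hsq
    exact hApos.ne' hsq.symm
  have hAdet : IsUnit A.det := (Matrix.isUnit_iff_isUnit_det A).mp hA.isUnit
  have hRAR : R * A * R = 1 := by
    have hAeq : A = R⁻¹ * R⁻¹ := by
      calc A = A⁻¹⁻¹ := (A.nonsing_inv_nonsing_inv hAdet).symm
      _ = (R * R)⁻¹ := by rw [hRR]
      _ = R⁻¹ * R⁻¹ := Matrix.mul_inv_rev R R
    have e1 : R * (R⁻¹ * R⁻¹) = R⁻¹ := by
      rw [← Matrix.mul_assoc, Matrix.mul_nonsing_inv _ hRdet, Matrix.one_mul]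
    rw [hAeq, e1, Matrix.nonsing_inv_mul _ hRdet]
  set N := R * (B * D⁻¹ * Bᴴ) * R with hNdef
  have hNpsd : N.PosSemidef := by
    have := hM.mul_mul_conjTranspose_same R
    rwa [hRH] at this
  have h1N : ((1 : Matrix (Fin d) (Fin d) ℝ) - N).PosSemidef := by
    have h2 : R * (A - B * D⁻¹ * Bᴴ) * R = 1 - N := by
      rw [Matrix.mul_sub, Matrix.sub_mul, hRAR]
    have := hS.mul_mul_conjTranspose_same R
    rwa [hRH, h2] at this
  have hblk : blkTerm V i = ((1 : Matrix (Fin d) (Fin d) ℝ) - N).det := by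
    rw [blkTerm, hC]
    have hprod : A⁻¹ * B * D⁻¹ * Bᴴ = R * (R * (B * D⁻¹ * Bᴴ)) := by
      rw [← hRR]
      simp only [Matrix.mul_assoc]
    rw [show (blkDiag V i)⁻¹ * blkRow V i * (blkMinor V i)⁻¹ * Bᴴ = A⁻¹ * B * D⁻¹ * Bᴴ from rfl,
      hprod, Matrix.det_one_sub_mul_comm, hNdef, Matrix.mul_assoc]
  constructor
  · rw [hblk]; exact det_nonneg_of_psd h1N
  · rw [hblk]
    refine det_le_one_of_psd h1N ?_
    rw [sub_sub_cancel]
    exact hNpsd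

/-- The multivariate regression effective sample size
`n_e^R = 1 + ((n-1)/n) Σ_i det(I - V_{ii}⁻¹ V_{i,-i} V_{-i,-i}⁻¹ V_{-i,i})`. -/
noncomputable def neRmv {n d : ℕ} (V : Matrix (Fin n × Fin d) (Fin n × Fin d) ℝ) : ℝ :=
  1 + (((n : ℝ) - 1) / n) * ∑ i, blkTerm V i

/-- For a symmetric positive definite matrix `V` partitioned into `n×n` blocks of equal
size `d`, each determinant `det(I_d - V_{ii}⁻¹ V_{i,-i} V_{-i,-i}⁻¹ V_{-i,i})` lies in
`[0,1]`; consequently the multivariate regression effective sample size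
`n_e^R = 1 + ((n-1)/n) Σ_i det(…)` satisfies `1 ≤ n_e^R ≤ n`, with `n_e^R = n` when all
off-diagonal blocks of `V` vanish. -/
theorem neRmv_mem_Icc {n d : ℕ} (hn : 1 ≤ n)
    (V : Matrix (Fin n × Fin d) (Fin n × Fin d) ℝ)
    (hVsymm : V.IsSymm) (hV : V.PosDef) :
    (∀ i, 0 ≤ blkTerm V i ∧ blkTerm V i ≤ 1) ∧
    1 ≤ neRmv V ∧ neRmv V ≤ n ∧
    ((∀ (i j : Fin n) (a b : Fin d), i ≠ j → V (i, a) (j, b) = 0) → neRmv V = n) := by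
  have hterm := blkTerm_mem V hVsymm hV
  have hn0 : (0 : ℝ) < n := by exact_mod_cast Nat.lt_of_lt_of_le Nat.zero_lt_one hn
  have hn1 : (1 : ℝ) ≤ n := by exact_mod_cast hn
  have hc : 0 ≤ ((n : ℝ) - 1) / n := div_nonneg (by linarith) hn0.le
  have hsum0 : 0 ≤ ∑ i, blkTerm V i := Finset.sum_nonneg fun i _ => (hterm i).1
  have hsum1 : ∑ i, blkTerm V i ≤ n := by
    calc ∑ i, blkTerm V i ≤ ∑ _i : Fin n, (1 : ℝ) :=
      Finset.sum_le_sum fun i _ => (hterm i).2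
    _ = n := by simp
  refine ⟨hterm, ?_, ?_, ?_⟩
  · exact le_add_of_nonneg_right (mul_nonneg hc hsum0)
  · have h1 : ((n : ℝ) - 1) / n * ∑ i, blkTerm V i ≤ ((n : ℝ) - 1) / n * n :=
      mul_le_mul_of_nonneg_left hsum1 hc
    have h2 : ((n : ℝ) - 1) / n * n = n - 1 := by field_simp
    rw [neRmv]
    linarith
  · intro hoff
    have hterm1 : ∀ i, blkTerm V i = 1 := by
      intro i
      have hB : blkRow V i = 0 := by
        ext a p
        exact hoff i p.1.1 a p.2 (Ne.symm p.1.2)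
      rw [blkTerm, hB]
      simp
    rw [neRmv]
    simp only [hterm1, Finset.sum_const, Finset.card_univ, Fintype.card_fin, nsmul_eq_mul,
      mul_one]
    field_simp
    ring
end
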